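/- arXiv:1109.2688 — 3 statements merged into one kernel-verified Lean document; each statement's English description precedes it below -/
import Mathlib

section
/- Convergence of the naive (Picard) iteration: assume every H_i has zero constant coefficient and J₀^p = 0 for some p ≥ 1, and let S be the unique solution of Y = H(z,Y) whose components have zero constant coefficients. Define Y^{[0]} = 0 and Y^{[n+1]} = (H_1(z,Y^{[n]}),…,H_m(z,Y^{[n]})). Then for every n ≥ 0 and every i, Y^{[np]}_i ≡ S_i mod z^{n+1}; in particular the iterates converge coefficientwise to S. -/
/-!
Let `Φ` be the Picard map `Y ↦ H(z, Y)`. If `s ≡ t mod z^N` (both with zero constant terms),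
then `Φ s ≡ Φ t mod z^N`, and the `z^N`-coefficients of `Φ s - Φ t` are `J₀` applied to those
of `s - t`: in a monomial of total degree at least two the substituted series differ only
modulo `z^(N+1)`, and the variable `z` is substituted by `z` on both sides. Hence `p` Picard
steps multiply the `z^N`-coefficient of the error by `J₀ ^ p = 0`, gaining one order of
contact with the fixed point `S`.
-/

/-- Substitution of a family `s` of one-variable formal power series (each intended to have
zero constant coefficient) into a multivariate formal power series `H` in `k` variables:
the coefficient of `z^n` in `H(s)` is the (finite) sum over all monomials `d` of the
coefficient of `d` in `H` times the coefficient of `z^n` in `∏ j, (s j) ^ (d j)`.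
When every `s j` has zero constant coefficient, only monomials `d` with
`∑ j, d j ≤ n` (in particular `d ≤ (n, …, n)`) can contribute, so this is the usual
well-defined substitution. -/
noncomputable def mvSubst {R : Type*} [CommSemiring R] {k : ℕ}
    (H : MvPowerSeries (Fin k) R) (s : Fin k → PowerSeries R) : PowerSeries R :=
  PowerSeries.mk fun n =>
    ∑ d ∈ Finset.Iic (Finsupp.equivFunOnFinite.symm fun _ : Fin k => n),
      MvPowerSeries.coeff d H * PowerSeries.coeff n (∏ j, (s j) ^ (d j))

open PowerSeries Finset

theorem pow_mul_dvd_mul_pow_sub_pow {A : Type*} [CommRing A] {a b x y : A}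
    (hx : a ∣ x) (hy : a ∣ y) (hxy : b ∣ x - y) (k : ℕ) :
    a ^ k * b ∣ a * (x ^ k - y ^ k) := by
  induction k with
  | zero => simp
  | succ k ih =>
    have hsplit : a * (x ^ (k + 1) - y ^ (k + 1)) =
        x * (a * (x ^ k - y ^ k)) + a * (x - y) * y ^ k := by
      ring
    have h1 : a * (a ^ k * b) ∣ x * (a * (x ^ k - y ^ k)) := mul_dvd_mul hx ih
    have h2 : a * b * a ^ k ∣ a * (x - y) * y ^ k :=
      mul_dvd_mul (mul_dvd_mul_left a hxy) (pow_dvd_pow_of_dvd hy k)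
    rw [hsplit]
    exact dvd_add (by convert h1 using 1; ring) (by convert h2 using 1; ring)

-- The factor `a` on the right avoids the truncated exponent `∑ i ∈ s, d i - 1`.
theorem pow_sum_mul_dvd_mul_prod_pow_sub_prod_pow {ι A : Type*} [CommRing A] {a b : A}
    {f g : ι → A} (hf : ∀ i, a ∣ f i) (hg : ∀ i, a ∣ g i) (hfg : ∀ i, b ∣ f i - g i)
    (d : ι → ℕ) (s : Finset ι) :
    a ^ (∑ i ∈ s, d i) * b ∣ a * (∏ i ∈ s, f i ^ d i - ∏ i ∈ s, g i ^ d i) := by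
  classical
  induction s using Finset.induction_on with
  | empty => simp
  | insert i s hi ih =>
    have hsplit : a * (∏ j ∈ insert i s, f j ^ d j - ∏ j ∈ insert i s, g j ^ d j) =
        f i ^ d i * (a * (∏ j ∈ s, f j ^ d j - ∏ j ∈ s, g j ^ d j)) +
          a * (f i ^ d i - g i ^ d i) * ∏ j ∈ s, g j ^ d j := by
      rw [prod_insert hi, prod_insert hi]; ring
    have hgs : a ^ (∑ j ∈ s, d j) ∣ ∏ j ∈ s, g j ^ d j := by
      rw [← prod_pow_eq_pow_sum]
      exact prod_dvd_prod_of_dvd _ _ fun j _ => pow_dvd_pow_of_dvd (hg j) _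
    rw [hsplit, sum_insert hi, pow_add]
    refine dvd_add ?_ ?_
    · rw [mul_assoc]; exact mul_dvd_mul (pow_dvd_pow_of_dvd (hf i) _) ih
    · rw [mul_right_comm]
      exact mul_dvd_mul (pow_mul_dvd_mul_pow_sub_pow (hf i) (hg i) (hfg i) _) hgs

theorem X_pow_succ_dvd_prod_pow_sub_prod_pow {R ι : Type*} [CommRing R] [Fintype ι]
    {f g : ι → R⟦X⟧} (hf : ∀ i, X ∣ f i) (hg : ∀ i, X ∣ g i) {N : ℕ}
    (hfg : ∀ i, X ^ N ∣ f i - g i) {d : ι → ℕ} (hd : 2 ≤ ∑ i, d i) :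
    X ^ (N + 1) ∣ ∏ i, f i ^ d i - ∏ i, g i ^ d i := by
  obtain ⟨c, hc⟩ := pow_sum_mul_dvd_mul_prod_pow_sub_prod_pow hf hg hfg d univ
  refine ⟨X ^ (∑ i, d i - 2) * c, X_mul_cancel ?_⟩
  rw [hc, ← pow_add, ← mul_assoc, ← mul_assoc, ← pow_succ', ← pow_add]
  congr 2
  omega

section

variable {R : Type*} [CommRing R]

theorem prod_pow_single_one {k : ℕ} (f : Fin k → R⟦X⟧) (u : Fin k) :
    ∏ v, f v ^ (Finsupp.single u 1 : Fin k →₀ ℕ) v = f u := by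
  simp [Finsupp.single_apply, pow_ite]

theorem constantCoeff_mvSubst {k : ℕ} (H : MvPowerSeries (Fin k) R) {s : Fin k → R⟦X⟧}
    (hs : ∀ u, constantCoeff (s u) = 0) :
    constantCoeff (mvSubst H s) = MvPowerSeries.coeff 0 H := by
  rw [← coeff_zero_eq_constantCoeff_apply, mvSubst, coeff_mk,
    sum_eq_single_of_mem 0 (mem_Iic.2 bot_le)]
  · simp
  · intro d _ hd
    obtain ⟨u, hu⟩ := Finsupp.ne_iff.1 hd
    rw [coeff_zero_eq_constantCoeff_apply, map_prod,
      prod_eq_zero (mem_univ u) (by rw [map_pow, hs u, zero_pow hu]), mul_zero]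

theorem coeff_mvSubst_sub_mvSubst {k : ℕ} (H : MvPowerSeries (Fin k) R) {f g : Fin k → R⟦X⟧}
    (hf : ∀ u, constantCoeff (f u) = 0) (hg : ∀ u, constantCoeff (g u) = 0) {N : ℕ}
    (hfg : ∀ u, X ^ N ∣ f u - g u) {j : ℕ} (hj : j ≤ N) :
    coeff j (mvSubst H f - mvSubst H g) =
      ∑ u, MvPowerSeries.coeff (Finsupp.single u 1) H * coeff j (f u - g u) := by
  classical
  rcases j.eq_zero_or_pos with rfl | hj0
  · simp [constantCoeff_mvSubst H hf, constantCoeff_mvSubst H hg, hf, hg]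
  set box := Iic (Finsupp.equivFunOnFinite.symm fun _ : Fin k => j)
  have hlin : univ.image (fun u => Finsupp.single u 1) ⊆ box := by
    intro d hd
    obtain ⟨u, -, rfl⟩ := mem_image.1 hd
    simp only [box, mem_Iic, Finsupp.le_def, Finsupp.single_apply,
      Finsupp.coe_equivFunOnFinite_symm]
    intro v
    split_ifs <;> omega
  have hnonlin : ∀ d ∈ box, d ∉ univ.image (fun u => Finsupp.single u 1) →
      MvPowerSeries.coeff d H * coeff j (∏ v, f v ^ d v - ∏ v, g v ^ d v) = 0 := by
    intro d _ hd
    have hd1 : ∑ v, d v ≠ 1 := by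
      intro h1
      obtain ⟨u, rfl⟩ : d ∈ Set.range fun u => Finsupp.single u 1 := by
        rw [Finsupp.range_single_one]
        exact (Finsupp.degree_eq_sum d).trans h1
      exact hd (mem_image_of_mem _ (mem_univ u))
    rcases eq_or_ne d 0 with rfl | hd0
    · simp
    have hd2 : 2 ≤ ∑ v, d v := by
      have : ∑ v, d v ≠ 0 := by rwa [← Finsupp.degree_eq_sum, Ne, Finsupp.degree_eq_zero_iff]
      omega
    have hdvd := X_pow_succ_dvd_prod_pow_sub_prod_pow (fun v => X_dvd_iff.2 (hf v))
      (fun v => X_dvd_iff.2 (hg v)) hfg hd2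
    rw [X_pow_dvd_iff.1 hdvd j (by omega), mul_zero]
  rw [mvSubst, mvSubst, map_sub, coeff_mk, coeff_mk, ← sum_sub_distrib]
  simp_rw [← mul_sub, ← map_sub]
  rw [← sum_subset hlin hnonlin,
    sum_image fun u _ v _ h => Finsupp.single_left_injective one_ne_zero h]
  simp only [prod_pow_single_one]

section Picard

open scoped Matrix

variable {m : ℕ} (H : Fin m → MvPowerSeries (Fin (m + 1)) R)

noncomputable def picardMap (Y : Fin m → R⟦X⟧) : Fin m → R⟦X⟧ :=
  fun i => mvSubst (H i) (Fin.cons X Y)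

noncomputable def jacobianAtZero : Matrix (Fin m) (Fin m) R :=
  Matrix.of fun i j => MvPowerSeries.coeff (Finsupp.single j.succ 1) (H i)

variable {H}

theorem constantCoeff_picardMap_iterate (hH0 : ∀ i, MvPowerSeries.coeff 0 (H i) = 0)
    {s : Fin m → R⟦X⟧} (hs : ∀ i, constantCoeff (s i) = 0) (k : ℕ) (i : Fin m) :
    constantCoeff ((picardMap H)^[k] s i) = 0 := by
  induction k generalizing i with
  | zero => exact hs i
  | succ k ih =>
    rw [Function.iterate_succ_apply', picardMap, constantCoeff_mvSubst _ (Fin.cases (by simp) ih),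
      hH0]

variable {s t : Fin m → R⟦X⟧}

theorem coeff_picardMap_sub_picardMap (hs : ∀ i, constantCoeff (s i) = 0)
    (ht : ∀ i, constantCoeff (t i) = 0) {N : ℕ} (hst : ∀ i, X ^ N ∣ s i - t i) {j : ℕ}
    (hj : j ≤ N) :
    (fun i => coeff j (picardMap H s i - picardMap H t i)) =
      jacobianAtZero H *ᵥ fun i => coeff j (s i - t i) := by
  funext i
  rw [picardMap, picardMap, coeff_mvSubst_sub_mvSubst (H i) (Fin.cases (by simp) hs)
    (Fin.cases (by simp) ht) (Fin.cases (by simp) hst) hj, Fin.sum_univ_succ]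
  simp [Matrix.mulVec, dotProduct, jacobianAtZero]

theorem X_pow_dvd_picardMap_sub_picardMap (hs : ∀ i, constantCoeff (s i) = 0)
    (ht : ∀ i, constantCoeff (t i) = 0) {N : ℕ} (hst : ∀ i, X ^ N ∣ s i - t i) (i : Fin m) :
    X ^ N ∣ picardMap H s i - picardMap H t i := by
  refine X_pow_dvd_iff.2 fun j hj => ?_
  have hzero : (fun l => coeff j (s l - t l)) = 0 := funext fun l => X_pow_dvd_iff.1 (hst l) j hj
  have h := congrFun (coeff_picardMap_sub_picardMap (H := H) hs ht hst hj.le) i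
  rw [hzero, Matrix.mulVec_zero] at h
  exact h

theorem X_pow_dvd_picardMap_iterate_sub (hH0 : ∀ i, MvPowerSeries.coeff 0 (H i) = 0)
    (hs : ∀ i, constantCoeff (s i) = 0) (ht : ∀ i, constantCoeff (t i) = 0) {N : ℕ}
    (hst : ∀ i, X ^ N ∣ s i - t i) (k : ℕ) (i : Fin m) :
    X ^ N ∣ (picardMap H)^[k] s i - (picardMap H)^[k] t i := by
  induction k generalizing i with
  | zero => exact hst i
  | succ k ih =>
    rw [Function.iterate_succ_apply', Function.iterate_succ_apply']
    exact X_pow_dvd_picardMap_sub_picardMap (constantCoeff_picardMap_iterate hH0 hs k)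
      (constantCoeff_picardMap_iterate hH0 ht k) ih i

theorem coeff_picardMap_iterate_sub (hH0 : ∀ i, MvPowerSeries.coeff 0 (H i) = 0)
    (hs : ∀ i, constantCoeff (s i) = 0) (ht : ∀ i, constantCoeff (t i) = 0) {N : ℕ}
    (hst : ∀ i, X ^ N ∣ s i - t i) (k : ℕ) :
    (fun i => coeff N ((picardMap H)^[k] s i - (picardMap H)^[k] t i)) =
      jacobianAtZero H ^ k *ᵥ fun i => coeff N (s i - t i) := by
  induction k with
  | zero => simp
  | succ k ih =>
    simp only [Function.iterate_succ_apply']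
    rw [coeff_picardMap_sub_picardMap (constantCoeff_picardMap_iterate hH0 hs k)
      (constantCoeff_picardMap_iterate hH0 ht k)
      (X_pow_dvd_picardMap_iterate_sub hH0 hs ht hst k) le_rfl, ih, Matrix.mulVec_mulVec,
      pow_succ']

theorem X_pow_succ_dvd_picardMap_iterate_sub (hH0 : ∀ i, MvPowerSeries.coeff 0 (H i) = 0)
    (hs : ∀ i, constantCoeff (s i) = 0) (ht : ∀ i, constantCoeff (t i) = 0) {N : ℕ}
    (hst : ∀ i, X ^ N ∣ s i - t i) {p : ℕ} (hJp : jacobianAtZero H ^ p = 0) (i : Fin m) :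
    X ^ (N + 1) ∣ (picardMap H)^[p] s i - (picardMap H)^[p] t i := by
  refine X_pow_dvd_iff.2 fun j hj => ?_
  rcases Nat.lt_succ_iff_lt_or_eq.1 hj with hj | rfl
  · exact X_pow_dvd_iff.1 (X_pow_dvd_picardMap_iterate_sub hH0 hs ht hst p i) j hj
  · have h := congrFun (coeff_picardMap_iterate_sub hH0 hs ht hst p) i
    rw [hJp, Matrix.zero_mulVec] at h
    exact h

end Picard

end

theorem picard_iteration_convergence_general {R : Type*} [CommRing R] {m : ℕ}
    (H : Fin m → MvPowerSeries (Fin (m + 1)) R)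
    (hH0 : ∀ i, MvPowerSeries.coeff 0 (H i) = 0)
    (p : ℕ)
    (hJp : (Matrix.of fun i j : Fin m =>
      MvPowerSeries.coeff (Finsupp.single j.succ 1) (H i)) ^ p = 0)
    (S : Fin m → PowerSeries R)
    (hS0 : ∀ i, PowerSeries.constantCoeff (S i) = 0)
    (hSfix : ∀ i, S i = mvSubst (H i) (Fin.cons PowerSeries.X S))
    (Y : ℕ → Fin m → PowerSeries R)
    (hY0 : Y 0 = 0)
    (hYrec : ∀ n i, Y (n + 1) i = mvSubst (H i) (Fin.cons PowerSeries.X (Y n))) :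
    ∀ n : ℕ, ∀ i, ∀ j ≤ n, PowerSeries.coeff j (Y (n * p) i) = PowerSeries.coeff j (S i) := by
  have hS : picardMap H S = S := funext fun i => (hSfix i).symm
  have hY : ∀ k l, Y (k + l) = (picardMap H)^[l] (Y k) := by
    intro k l
    induction l with
    | zero => rfl
    | succ l ih => rw [Function.iterate_succ_apply', ← ih]; exact funext (hYrec (k + l))
  have hYconst : ∀ k i, constantCoeff (Y k i) = 0 := by
    intro k
    rw [← zero_add k, hY, hY0]
    exact constantCoeff_picardMap_iterate hH0 (by simp) k
  suffices h : ∀ n i, X ^ (n + 1) ∣ Y (n * p) i - S i from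
    fun n i j hj => sub_eq_zero.1 (X_pow_dvd_iff.1 (h n i) j (Nat.lt_succ_of_le hj))
  intro n
  induction n with
  | zero => simp [hY0, X_dvd_iff, hS0]
  | succ n ih =>
    intro i
    have h := X_pow_succ_dvd_picardMap_iterate_sub hH0 (hYconst _) hS0 ih hJp i
    rwa [Function.iterate_fixed hS, ← hY, ← add_one_mul] at h

/-- **Convergence of the naive (Picard) iteration.**  With `H` having zero constant
coefficients and `J₀ ^ p = 0` for some `p ≥ 1`, if `S` is the solution of `Y = H(z,Y)` with
zero constant coefficients and `Y 0 = 0`, `Y (n+1) = H(z, Y n)`, then `Y (n * p)` agrees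
with `S` in all degrees `j ≤ n`, i.e. `Y^{[np]} ≡ S mod z^(n+1)`. -/
theorem picard_iteration_convergence {R : Type*} [CommRing R] {m : ℕ} (hm : 1 ≤ m)
    (H : Fin m → MvPowerSeries (Fin (m + 1)) R)
    (hH0 : ∀ i, MvPowerSeries.coeff 0 (H i) = 0)
    (p : ℕ) (hp : 1 ≤ p)
    (hJp : (Matrix.of fun i j : Fin m =>
      MvPowerSeries.coeff (Finsupp.single j.succ 1) (H i)) ^ p = 0)
    (S : Fin m → PowerSeries R)
    (hS0 : ∀ i, PowerSeries.constantCoeff (S i) = 0)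
    (hSfix : ∀ i, S i = mvSubst (H i) (Fin.cons PowerSeries.X S))
    (Y : ℕ → Fin m → PowerSeries R)
    (hY0 : Y 0 = 0)
    (hYrec : ∀ n i, Y (n + 1) i = mvSubst (H i) (Fin.cons PowerSeries.X (Y n))) :
    ∀ n : ℕ, ∀ i, ∀ j ≤ n, PowerSeries.coeff j (Y (n * p) i) = PowerSeries.coeff j (S i) :=
  picard_iteration_convergence_general H hH0 p hJp S hS0 hSfix Y hY0 hYrec
end

section
/- Well-founded integral systems have unique solutions: let R be a commutative ring which is a ℚ-algebra and let H, G be formal power series in the two variables z, y over R such that the constant coefficient of H and the coefficient of the monomial y in H both vanish. Then there exists exactly one formal power series S in z over R with zero constant coefficient such that the formal derivative of S − H(z,S) equals G(z,S) (equivalently, S = H(z,S) + I where I is the unique formal antiderivative of G(z,S) with zero constant term). -/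
/-! Solutions are the fixed points, among series without constant term, of
`Φ S = H(z,S) + ∫ G(z,S)`. As `H` has no constant and no pure `y` term and integration raises
valuations by one, `S ≡ T mod z^n` implies `Φ S ≡ Φ T mod z^(n+1)`. So the iterates of `Φ`
from `0` converge coefficientwise to a fixed point, and two fixed points agree modulo every `z^n`.
-/

open PowerSeries

theorem pow_add_dvd_pow_succ_sub_pow_succ {A : Type*} [CommRing A] {x a b : A} {n : ℕ}
    (ha : x ∣ a) (hb : x ∣ b) (h : x ^ n ∣ a - b) (k : ℕ) :
    x ^ (n + k) ∣ a ^ (k + 1) - b ^ (k + 1) := by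
  induction k with
  | zero => simpa using h
  | succ k ih =>
    have hfirst : x ^ (n + (k + 1)) ∣ (a - b) * a ^ (k + 1) :=
      pow_add x n (k + 1) ▸ mul_dvd_mul h (pow_dvd_pow_of_dvd ha (k + 1))
    have hsecond : x ^ (n + (k + 1)) ∣ b * (a ^ (k + 1) - b ^ (k + 1)) := by
      rw [← add_assoc, pow_succ']; exact mul_dvd_mul hb ih
    rw [show a ^ (k + 1 + 1) - b ^ (k + 1 + 1) =
      (a - b) * a ^ (k + 1) + b * (a ^ (k + 1) - b ^ (k + 1)) by ring]
    exact dvd_add hfirst hsecond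

lemma inv_smul_mul_natCast_succ {R : Type*} [CommRing R] [Algebra ℚ R] (a : R) (n : ℕ) :
    (n + 1 : ℚ)⁻¹ • (a * (n + 1)) = a := by
  rw [show a * (n + 1) = (n + 1 : ℚ) • a by
    rw [Algebra.smul_def, mul_comm]; simp]
  exact inv_smul_smul₀ (by positivity) a

namespace PowerSeries

section Antiderivative

variable {R : Type*} [CommRing R] [Algebra ℚ R]

noncomputable def antideriv (f : R⟦X⟧) : R⟦X⟧ :=
  mk fun
    | 0 => 0
    | n + 1 => (n + 1 : ℚ)⁻¹ • coeff n f

@[simp] lemma constantCoeff_antideriv (f : R⟦X⟧) : constantCoeff (antideriv f) = 0 := by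
  rw [← coeff_zero_eq_constantCoeff_apply, antideriv, coeff_mk]

lemma coeff_succ_antideriv (f : R⟦X⟧) (n : ℕ) :
    coeff (n + 1) (antideriv f) = (n + 1 : ℚ)⁻¹ • coeff n f := by
  rw [antideriv, coeff_mk]

@[simp] lemma derivative_antideriv (f : R⟦X⟧) : d⁄dX R (antideriv f) = f := by
  ext n
  rw [coeff_derivative, coeff_succ_antideriv, smul_mul_assoc, inv_smul_mul_natCast_succ]

lemma eq_antideriv_of_derivative_eq {f g : R⟦X⟧} (hf : constantCoeff f = 0)
    (h : d⁄dX R f = g) : f = antideriv g := by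
  ext (_ | n)
  · simpa using hf
  · rw [coeff_succ_antideriv, ← h, coeff_derivative, inv_smul_mul_natCast_succ]

lemma X_pow_succ_dvd_antideriv_sub {f g : R⟦X⟧} {n : ℕ} (h : X ^ n ∣ f - g) :
    X ^ (n + 1) ∣ antideriv f - antideriv g := by
  rw [X_pow_dvd_iff] at h ⊢
  rintro (_ | m) hm
  · simp
  · rw [map_sub, coeff_succ_antideriv, coeff_succ_antideriv, ← smul_sub, ← map_sub,
      h m (by omega), smul_zero]

lemma derivative_eq_iff_eq_antideriv {f g : R⟦X⟧} (hf : constantCoeff f = 0) :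
    d⁄dX R f = g ↔ f = antideriv g :=
  ⟨eq_antideriv_of_derivative_eq hf, fun h => h ▸ derivative_antideriv g⟩

end Antiderivative

variable {R : Type*} [CommRing R]

lemma eq_of_forall_X_pow_dvd_sub {f g : R⟦X⟧} (h : ∀ n, X ^ n ∣ f - g) : f = g := by
  ext n
  simpa [sub_eq_zero] using X_pow_dvd_iff.mp (h (n + 1)) n (by omega)

section Contraction

variable {Φ : R⟦X⟧ → R⟦X⟧} (hΦX : ∀ S, X ∣ S → X ∣ Φ S)
  (hΦ : ∀ S T n, X ∣ S → X ∣ T → X ^ n ∣ S - T → X ^ (n + 1) ∣ Φ S - Φ T)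
include hΦX

lemma X_dvd_iterate {S : R⟦X⟧} (hS : X ∣ S) (k : ℕ) : X ∣ Φ^[k] S := by
  induction k with
  | zero => exact hS
  | succ k ih => rw [Function.iterate_succ_apply']; exact hΦX _ ih

include hΦ

lemma X_pow_dvd_iterate_sub {S T : R⟦X⟧} (hS : X ∣ S) (hT : X ∣ T) (k : ℕ) :
    X ^ k ∣ Φ^[k] S - Φ^[k] T := by
  induction k with
  | zero => simp
  | succ k ih =>
    rw [Function.iterate_succ_apply', Function.iterate_succ_apply']
    exact hΦ _ _ _ (X_dvd_iterate hΦX hS k) (X_dvd_iterate hΦX hT k) ih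

theorem existsUnique_fixedPt_of_X_pow_succ_dvd_sub :
    ∃! S : R⟦X⟧, X ∣ S ∧ Φ S = S := by
  set u : ℕ → R⟦X⟧ := fun k => Φ^[k] 0
  have hu : ∀ k j, k ≤ j → X ^ k ∣ u j - u k := fun k j hkj => by
    obtain ⟨m, rfl⟩ := Nat.exists_eq_add_of_le hkj
    simp only [u, Function.iterate_add_apply]
    exact X_pow_dvd_iterate_sub hΦX hΦ (X_dvd_iterate hΦX (dvd_zero X) m) (dvd_zero X) k
  set S : R⟦X⟧ := mk fun n => coeff n (u (n + 1))
  have hS : ∀ k, X ^ k ∣ S - u k := fun k => X_pow_dvd_iff.mpr fun m hm => by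
    have hcoeff := X_pow_dvd_iff.mp (hu (m + 1) k hm) m (by omega)
    rw [map_sub, sub_eq_zero] at hcoeff
    rw [map_sub, coeff_mk, hcoeff, sub_self]
  have hSX : X ∣ S := by
    have h1 : X ∣ S - u 1 := pow_one (X : R⟦X⟧) ▸ hS 1
    exact sub_add_cancel S (u 1) ▸ dvd_add h1 (X_dvd_iterate hΦX (dvd_zero X) 1)
  have hSfix : Φ S = S := eq_of_forall_X_pow_dvd_sub fun k => by
    have hΦS : X ^ (k + 1) ∣ Φ S - u (k + 1) := by
      simpa [u, Function.iterate_succ_apply'] using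
        hΦ _ _ _ hSX (X_dvd_iterate hΦX (dvd_zero X) k) (hS k)
    simpa using dvd_trans (pow_dvd_pow X k.le_succ) (dvd_sub hΦS (hS (k + 1)))
  refine ⟨S, ⟨hSX, hSfix⟩, fun T ⟨hTX, hT⟩ => eq_of_forall_X_pow_dvd_sub fun k => ?_⟩
  simpa [Function.iterate_fixed hT, Function.iterate_fixed hSfix] using
    X_pow_dvd_iterate_sub hΦX hΦ hTX hSX k

end Contraction

end PowerSeries

section Substitution

variable {R : Type*} [CommRing R]

lemma coeff_mvSubst_X_sub (F : MvPowerSeries (Fin 2) R) (S T : R⟦X⟧) (m : ℕ) :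
    coeff m (mvSubst F ![X, S] - mvSubst F ![X, T]) =
      ∑ d ∈ Finset.Iic (Finsupp.equivFunOnFinite.symm fun _ : Fin 2 => m),
        MvPowerSeries.coeff d F * coeff m (X ^ d 0 * (S ^ d 1 - T ^ d 1)) := by
  simp only [mvSubst, map_sub, coeff_mk, ← Finset.sum_sub_distrib, mul_sub,
    Fin.prod_univ_two, Matrix.cons_val_zero, Matrix.cons_val_one, Matrix.cons_val_fin_one]

lemma X_pow_dvd_mvSubst_sub {F : MvPowerSeries (Fin 2) R} {S T : R⟦X⟧} {n N : ℕ}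
    (hS : X ∣ S) (hT : X ∣ T) (hST : X ^ n ∣ S - T)
    -- the monomial `z^a y^b` with `b > 0` moves by a multiple of `z^(n + a + b - 1)`
    (hF : ∀ d, MvPowerSeries.coeff d F ≠ 0 → 0 < d 1 → N < n + d 0 + d 1) :
    X ^ N ∣ mvSubst F ![X, S] - mvSubst F ![X, T] := by
  refine X_pow_dvd_iff.mpr fun m hm => ?_
  rw [coeff_mvSubst_X_sub]
  refine Finset.sum_eq_zero fun d _ => ?_
  by_cases hd : MvPowerSeries.coeff d F = 0
  · rw [hd, zero_mul]
  cases hk : d 1 with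
  | zero => simp
  | succ k =>
    have hN := hF d hd (by omega)
    have hdvd : X ^ (n + d 0 + k) ∣ X ^ d 0 * (S ^ (k + 1) - T ^ (k + 1)) := by
      rw [show n + d 0 + k = d 0 + (n + k) by ring, pow_add]
      exact mul_dvd_mul_left _ (pow_add_dvd_pow_succ_sub_pow_succ hS hT hST k)
    rw [X_pow_dvd_iff.mp hdvd m (by omega), mul_zero]

lemma X_pow_dvd_mvSubst_sub_of_dvd (F : MvPowerSeries (Fin 2) R) {S T : R⟦X⟧} {n : ℕ}
    (hS : X ∣ S) (hT : X ∣ T) (hST : X ^ n ∣ S - T) :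
    X ^ n ∣ mvSubst F ![X, S] - mvSubst F ![X, T] :=
  X_pow_dvd_mvSubst_sub hS hT hST fun _ _ _ => by omega

lemma X_pow_succ_dvd_mvSubst_sub_of_dvd {F : MvPowerSeries (Fin 2) R}
    (hF : MvPowerSeries.coeff (Finsupp.single 1 1) F = 0) {S T : R⟦X⟧} {n : ℕ}
    (hS : X ∣ S) (hT : X ∣ T) (hST : X ^ n ∣ S - T) :
    X ^ (n + 1) ∣ mvSubst F ![X, S] - mvSubst F ![X, T] := by
  refine X_pow_dvd_mvSubst_sub hS hT hST fun d hd hd1 => ?_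
  by_contra! hsmall
  have hd_eq : d = Finsupp.single 1 1 := by
    ext i
    fin_cases i <;> simp <;> omega
  exact hd (hd_eq ▸ hF)

lemma X_dvd_mvSubst {F : MvPowerSeries (Fin 2) R} (hF : MvPowerSeries.coeff 0 F = 0)
    (s : Fin 2 → R⟦X⟧) : X ∣ mvSubst F s := by
  have h0 : (Finsupp.equivFunOnFinite.symm fun _ : Fin 2 => 0) = 0 := by ext; simp
  rw [X_dvd_iff, ← coeff_zero_eq_constantCoeff_apply, mvSubst, coeff_mk, h0, ← bot_eq_zero,
    Finset.Iic_bot, Finset.sum_singleton, bot_eq_zero, hF, zero_mul]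

end Substitution

noncomputable def integralSystemMap {R : Type*} [CommRing R] [Algebra ℚ R]
    (H G : MvPowerSeries (Fin 2) R) (S : R⟦X⟧) : R⟦X⟧ :=
  mvSubst H ![X, S] + antideriv (mvSubst G ![X, S])

section IntegralSystem

variable {R : Type*} [CommRing R] [Algebra ℚ R] {H G : MvPowerSeries (Fin 2) R}

lemma X_dvd_integralSystemMap (hH : MvPowerSeries.coeff 0 H = 0) (S : R⟦X⟧) :
    X ∣ integralSystemMap H G S :=
  dvd_add (X_dvd_mvSubst hH _) (X_dvd_iff.mpr (constantCoeff_antideriv _))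

lemma X_pow_succ_dvd_integralSystemMap_sub (hH : MvPowerSeries.coeff (Finsupp.single 1 1) H = 0)
    {S T : R⟦X⟧} {n : ℕ} (hS : X ∣ S) (hT : X ∣ T) (hST : X ^ n ∣ S - T) :
    X ^ (n + 1) ∣ integralSystemMap H G S - integralSystemMap H G T := by
  rw [integralSystemMap, integralSystemMap, add_sub_add_comm]
  exact dvd_add (X_pow_succ_dvd_mvSubst_sub_of_dvd hH hS hT hST)
    (X_pow_succ_dvd_antideriv_sub (X_pow_dvd_mvSubst_sub_of_dvd G hS hT hST))

lemma derivative_sub_mvSubst_eq_iff (hH : MvPowerSeries.coeff 0 H = 0) {S : R⟦X⟧}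
    (hS : X ∣ S) :
    d⁄dX R (S - mvSubst H ![X, S]) = mvSubst G ![X, S] ↔ integralSystemMap H G S = S := by
  rw [derivative_eq_iff_eq_antideriv (X_dvd_iff.mp (dvd_sub hS (X_dvd_mvSubst hH _))),
    sub_eq_iff_eq_add', eq_comm, integralSystemMap]

end IntegralSystem

/-- **Well-founded integral systems have unique solutions.**  Over a commutative
`ℚ`-algebra `R`, if `H` is a two-variable formal power series (variables `0 = z`, `1 = y`)
whose constant coefficient and coefficient of the monomial `y` both vanish, then for any
two-variable formal power series `G` there is exactly one formal power series `S` in `z`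
with zero constant coefficient satisfying `(S - H(z,S))' = G(z,S)` (equivalently,
`S = H(z,S) + ∫ G(z,S)`). -/
theorem integral_system_existence_uniqueness {R : Type*} [CommRing R] [Algebra ℚ R]
    (H G : MvPowerSeries (Fin 2) R)
    (hH00 : MvPowerSeries.coeff 0 H = 0)
    (hHy : MvPowerSeries.coeff (Finsupp.single 1 1) H = 0) :
    ∃! S : PowerSeries R, PowerSeries.constantCoeff S = 0 ∧
      PowerSeries.derivativeFun (S - mvSubst H ![PowerSeries.X, S]) =
        mvSubst G ![PowerSeries.X, S] := by
  have hfix : ∃! S : R⟦X⟧, X ∣ S ∧ integralSystemMap H G S = S :=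
    existsUnique_fixedPt_of_X_pow_succ_dvd_sub (fun S _ => X_dvd_integralSystemMap hH00 S)
      fun _ _ _ hS hT hST => X_pow_succ_dvd_integralSystemMap_sub hHy hS hT hST
  refine (existsUnique_congr fun S => ?_).mpr hfix
  rw [← X_dvd_iff]
  exact and_congr_right (derivative_sub_mvSubst_eq_iff hH00)
end

section
/- Variation of the constant for formal linear differential systems: let R be a commutative ring which is a ℚ-algebra, m ≥ 1, k ≥ 0 and ℓ ≥ 0. Let A, M, W be m×m matrices of formal power series in z over R such that the constant-coefficient matrix of M is the identity, M′ = A·M, and W ≡ M mod z^{k+1} entrywise (so the constant-coefficient matrix of W is the identity and W is invertible over the matrix ring of power series). Let B be a vector of m formal power series in z, each either zero or of valuation at least ℓ, let V be the vector of power series with zero constant coefficients satisfying V′ = W^{-1}·B, and let S be a vector of power series with zero constant coefficients satisfying S′ = A·S + B. Then W·V ≡ S mod z^{k+ℓ+2} componentwise. -/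
/-!
Put `E = W·V - S`. Differentiating, and using `W·V' = B` and `S' = A·S + B`, gives
`E' = A·E + (W' - A·W)·V`. Since `W ≡ M mod z^(k+1)` and `M' = A·M`, the defect `W' - A·W`
vanishes mod `z^k`, while `V` vanishes mod `z^(ℓ+1)` because `V' = W⁻¹·B` vanishes mod `z^ℓ`.
So `E' - A·E` vanishes mod `z^(k+ℓ+1)`, and integrating `E' = A·E + O(z^(k+ℓ+1))` from
`E(0) = 0` one order at a time shows that `E` vanishes mod `z^(k+ℓ+2)`.
-/

open PowerSeries Matrix

section Divisibility

variable {α ι κ : Type*} [CommSemiring α] [Fintype κ]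

theorem Matrix.dvd_mulVec_apply {c : α} (N : Matrix ι κ α) {v : κ → α} (hv : ∀ j, c ∣ v j)
    (i : ι) : c ∣ (N *ᵥ v) i :=
  Finset.dvd_sum fun j _ => (hv j).mul_left _

theorem Matrix.dvd_mul_apply {c : α} (A : Matrix ι κ α) {N : Matrix κ ι α}
    (hN : ∀ i j, c ∣ N i j) (i j : ι) : c ∣ (A * N) i j :=
  Finset.dvd_sum fun l _ => (hN l j).mul_left _

theorem Matrix.mul_dvd_mulVec_apply {a b : α} {N : Matrix ι κ α} {v : κ → α}
    (hN : ∀ i j, a ∣ N i j) (hv : ∀ j, b ∣ v j) (i : ι) : a * b ∣ (N *ᵥ v) i :=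
  Finset.dvd_sum fun j _ => mul_dvd_mul (hN i j) (hv j)

end Divisibility

section Derivation

variable {R A ι κ : Type*} [CommSemiring R] [CommRing A] [Algebra R A] [Fintype κ]

theorem Derivation.map_mulVec_apply (D : Derivation R A A) (N : Matrix ι κ A) (v : κ → A)
    (i : ι) : D ((N *ᵥ v) i) = (N *ᵥ fun j => D (v j)) i + (N.map ⇑D *ᵥ v) i := by
  simp only [mulVec, dotProduct, map_sum, Derivation.leibniz, smul_eq_mul, map_apply,
    Finset.sum_add_distrib, mul_comm (v _)]

theorem Derivation.map_mulVec_sub_apply [Fintype ι] (D : Derivation R A A) {M : Matrix ι ι A}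
    {W : Matrix ι κ A} {V : κ → A} {T B : ι → A} (hV : W *ᵥ (fun j => D (V j)) = B)
    (hT : ∀ i, D (T i) = (M *ᵥ T) i + B i) (i : ι) :
    D ((W *ᵥ V - T) i) = (M *ᵥ (W *ᵥ V - T)) i + ((W.map ⇑D - M * W) *ᵥ V) i := by
  rw [Pi.sub_apply, map_sub, D.map_mulVec_apply, hV, hT, mulVec_sub, sub_mulVec,
    mulVec_mulVec]
  simp only [Pi.sub_apply]
  ring

end Derivation

theorem Matrix.isUnit_iff_isUnit_map_constantCoeff {R ι : Type*} [CommRing R] [Fintype ι]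
    [DecidableEq ι] {W : Matrix ι ι R⟦X⟧} : IsUnit W ↔ IsUnit (W.map constantCoeff) := by
  rw [isUnit_iff_isUnit_det, isUnit_iff_isUnit_det, isUnit_iff_constantCoeff, RingHom.map_det]
  rfl

namespace PowerSeries

variable {R : Type*} [CommRing R]

theorem X_pow_dvd_derivative {n : ℕ} {f : R⟦X⟧} (h : X ^ (n + 1) ∣ f) :
    X ^ n ∣ d⁄dX R f := by
  rw [X_pow_dvd_iff] at h ⊢
  intro m hm
  rw [coeff_derivative, h (m + 1) (by omega), zero_mul]

theorem isUnit_natCast_add_one [Algebra ℚ R] (n : ℕ) : IsUnit ((n : R) + 1) := by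
  simpa using (isUnit_iff_ne_zero.mpr n.cast_add_one_ne_zero).map (algebraMap ℚ R)

theorem X_pow_succ_dvd_of_derivative [Algebra ℚ R] {n : ℕ} {f : R⟦X⟧}
    (h0 : constantCoeff f = 0) (h : X ^ n ∣ d⁄dX R f) : X ^ (n + 1) ∣ f := by
  rw [X_pow_dvd_iff] at h ⊢
  rintro (_ | m) hm
  · rwa [coeff_zero_eq_constantCoeff_apply]
  · have hm' := h m (by omega)
    rw [coeff_derivative] at hm'
    exact (isUnit_natCast_add_one m).mul_left_eq_zero.mp hm'

section LinearSystem

variable {ι : Type*} [Fintype ι]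

theorem X_pow_dvd_map_derivative_sub_mul_apply {k : ℕ} {A M W : Matrix ι ι R⟦X⟧}
    (hM : ∀ i j, d⁄dX R (M i j) = (A * M) i j)
    (hWM : ∀ i j, X ^ (k + 1) ∣ W i j - M i j) (i j : ι) :
    X ^ k ∣ (W.map (d⁄dX R) - A * W) i j := by
  have hsplit : (W.map (d⁄dX R) - A * W) i j = d⁄dX R (W i j - M i j) - (A * (W - M)) i j := by
    rw [mul_sub, Matrix.sub_apply, Matrix.sub_apply, map_apply, map_sub, hM]
    ring
  rw [hsplit]
  exact dvd_sub (X_pow_dvd_derivative (hWM i j))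
    (Matrix.dvd_mul_apply A (fun l j => (pow_dvd_pow X k.le_succ).trans (hWM l j)) i j)

theorem X_pow_succ_dvd_of_derivative_eq_mulVec_add [Algebra ℚ R] {N : ℕ}
    (A : Matrix ι ι R⟦X⟧) {E G : ι → R⟦X⟧} (hE0 : ∀ i, constantCoeff (E i) = 0)
    (hE : ∀ i, d⁄dX R (E i) = (A *ᵥ E) i + G i) (hG : ∀ i, X ^ N ∣ G i) (i : ι) :
    X ^ (N + 1) ∣ E i := by
  suffices ∀ n ≤ N + 1, ∀ i, X ^ n ∣ E i from this (N + 1) le_rfl i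
  intro n
  induction n with
  | zero => simp
  | succ n ih =>
    intro hn i
    refine X_pow_succ_dvd_of_derivative (hE0 i) ?_
    rw [hE i]
    exact dvd_add (Matrix.dvd_mulVec_apply A (ih (by omega)) i)
      ((pow_dvd_pow X (by omega)).trans (hG i))

end LinearSystem

end PowerSeries

theorem variation_of_the_constant_general {R : Type*} [CommRing R] [Algebra ℚ R]
    {m : ℕ} (k ℓ : ℕ)
    (A M W : Matrix (Fin m) (Fin m) (PowerSeries R))
    (hM0 : M.map (PowerSeries.constantCoeff (R := R)) = 1)
    (hM' : ∀ i j, PowerSeries.derivativeFun (M i j) = (A * M) i j)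
    (hWM : ∀ i j, ∀ n ≤ k, PowerSeries.coeff (R := R) n (W i j) = PowerSeries.coeff (R := R) n (M i j))
    (B : Fin m → PowerSeries R)
    (hB : ∀ i, ∀ n < ℓ, PowerSeries.coeff (R := R) n (B i) = 0)
    (V : Fin m → PowerSeries R)
    (hV0 : ∀ i, PowerSeries.constantCoeff (R := R) (V i) = 0)
    (hV' : ∀ i, PowerSeries.derivativeFun (V i) = (Ring.inverse W).mulVec B i)
    (S : Fin m → PowerSeries R)
    (hS0 : ∀ i, PowerSeries.constantCoeff (R := R) (S i) = 0)
    (hS' : ∀ i, PowerSeries.derivativeFun (S i) = A.mulVec S i + B i) :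
    IsUnit W ∧
      ∀ i, ∀ n < k + ℓ + 2,
        PowerSeries.coeff (R := R) n (W.mulVec V i) = PowerSeries.coeff (R := R) n (S i) := by
  replace hM' : ∀ i j, d⁄dX R (M i j) = (A * M) i j := hM'
  replace hV' : ∀ i, d⁄dX R (V i) = (Ring.inverse W *ᵥ B) i := hV'
  replace hS' : ∀ i, d⁄dX R (S i) = (A *ᵥ S) i + B i := hS'
  have hWM : ∀ i j, X ^ (k + 1) ∣ W i j - M i j := fun i j =>
    X_pow_dvd_iff.mpr fun n hn => by rw [map_sub, hWM i j n (by omega), sub_self]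
  have hW : IsUnit W := by
    refine Matrix.isUnit_iff_isUnit_map_constantCoeff.mpr ?_
    convert isUnit_one using 1
    rw [← hM0]
    ext i j
    have h := X_dvd_iff.mp ((dvd_pow_self X k.succ_ne_zero).trans (hWM i j))
    rwa [map_sub, sub_eq_zero] at h
  have hV : ∀ j, X ^ (ℓ + 1) ∣ V j := fun j =>
    X_pow_succ_dvd_of_derivative (hV0 j)
      ((hV' j).symm ▸ Matrix.dvd_mulVec_apply _ (fun i => X_pow_dvd_iff.mpr (hB i)) j)
  have hWV' : W *ᵥ (fun j => d⁄dX R (V j)) = B := by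
    rw [funext hV', mulVec_mulVec, Ring.mul_inverse_cancel W hW, one_mulVec]
  have hD := X_pow_dvd_map_derivative_sub_mul_apply hM' hWM
  have hE0 : ∀ i, constantCoeff ((W *ᵥ V - S) i) = 0 := fun i =>
    X_dvd_iff.mp (dvd_sub (Matrix.dvd_mulVec_apply W (fun j => X_dvd_iff.mpr (hV0 j)) i)
      (X_dvd_iff.mpr (hS0 i)))
  have hE := X_pow_succ_dvd_of_derivative_eq_mulVec_add (N := k + ℓ + 1) A hE0
    ((d⁄dX R).map_mulVec_sub_apply hWV' hS')
    (fun i => pow_add (X : R⟦X⟧) k (ℓ + 1) ▸ Matrix.mul_dvd_mulVec_apply hD hV i)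
  refine ⟨hW, fun i n hn => ?_⟩
  simpa [sub_eq_zero] using X_pow_dvd_iff.mp (hE i) n hn

/-- **Variation of the constant for formal linear differential systems.**  Over a
commutative `ℚ`-algebra `R`, let `M' = A·M` with the constant-coefficient matrix of `M`
equal to the identity, and let `W ≡ M  mod z^(k+1)` entrywise (so `W` is invertible over
the matrix ring of power series).  If every `B i` has valuation at least `ℓ` (all
coefficients vanish in degrees `< ℓ`), `V` has zero constant coefficients and
`V' = W⁻¹·B`, and `S` has zero constant coefficients and `S' = A·S + B`, then
`W·V ≡ S mod z^(k+ℓ+2)` componentwise. -/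
theorem variation_of_the_constant {R : Type*} [CommRing R] [Algebra ℚ R]
    {m : ℕ} (hm : 1 ≤ m) (k ℓ : ℕ)
    (A M W : Matrix (Fin m) (Fin m) (PowerSeries R))
    (hM0 : M.map (PowerSeries.constantCoeff (R := R)) = 1)
    (hM' : ∀ i j, PowerSeries.derivativeFun (M i j) = (A * M) i j)
    (hWM : ∀ i j, ∀ n ≤ k, PowerSeries.coeff (R := R) n (W i j) = PowerSeries.coeff (R := R) n (M i j))
    (B : Fin m → PowerSeries R)
    (hB : ∀ i, ∀ n < ℓ, PowerSeries.coeff (R := R) n (B i) = 0)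
    (V : Fin m → PowerSeries R)
    (hV0 : ∀ i, PowerSeries.constantCoeff (R := R) (V i) = 0)
    (hV' : ∀ i, PowerSeries.derivativeFun (V i) = (Ring.inverse W).mulVec B i)
    (S : Fin m → PowerSeries R)
    (hS0 : ∀ i, PowerSeries.constantCoeff (R := R) (S i) = 0)
    (hS' : ∀ i, PowerSeries.derivativeFun (S i) = A.mulVec S i + B i) :
    IsUnit W ∧
      ∀ i, ∀ n < k + ℓ + 2,
        PowerSeries.coeff (R := R) n (W.mulVec V i) = PowerSeries.coeff (R := R) n (S i) :=
  variation_of_the_constant_general k ℓ A M W hM0 hM' hWM B hB V hV0 hV' S hS0 hS'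
end
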